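/- Let W > 0 and s ∈ [0,1). Then the function ξ_s(d) = arctan(πWs/d) / (W·arctan(πW/d)) is monotonically decreasing in d on (0,∞). Equivalently, for fixed s ∈ (0,1), the function u ↦ arctan(s·u)/arctan(u) is monotonically increasing in u on (0,∞). -/
import Mathlib

open Real Set

lemma my_arctan_pos {x : ℝ} (hx : 0 < x) : 0 < arctan x := by
  rw [← Real.arctan_zero]; exact Real.arctan_strictMono hx

lemma my_arctan_le_self {x : ℝ} (hx : 0 ≤ x) : arctan x ≤ x := by
  rcases hx.eq_or_lt with h | h
  · simp [← h]
  · have h1 : 0 < arctan x := my_arctan_pos h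
    have h2 := Real.lt_tan h1 (Real.arctan_lt_pi_div_two x)
    rw [Real.tan_arctan] at h2
    exact h2.le

/-- `x ↦ (x + x⁻¹) * arctan x` is monotone on `(0,∞)`. -/
lemma aux_mono : MonotoneOn (fun x : ℝ => (x + x⁻¹) * Real.arctan x) (Ioi 0) := by
  apply monotoneOn_of_deriv_nonneg (convex_Ioi 0)
  · apply ContinuousOn.mul _ Real.continuous_arctan.continuousOn
    exact (continuous_id.continuousOn).add (continuousOn_inv₀.mono (by
      intro x hx; exact ne_of_gt hx))
  · rw [interior_Ioi]
    intro x hx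
    have hx0 : (x : ℝ) ≠ 0 := ne_of_gt hx
    exact (((differentiable_id.differentiableAt).add
      (differentiableAt_inv hx0)).mul
      (Real.differentiable_arctan x)).differentiableWithinAt
  · rw [interior_Ioi]
    intro x hx
    have hx0 : (x : ℝ) ≠ 0 := ne_of_gt hx
    have hd : HasDerivAt (fun x : ℝ => (x + x⁻¹) * Real.arctan x)
        ((1 + -(x^2)⁻¹) * Real.arctan x + (x + x⁻¹) * (1/(1+x^2))) x := by
      exact ((hasDerivAt_id x).add (hasDerivAt_inv hx0)).mul (Real.hasDerivAt_arctan x)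
    rw [hd.deriv]
    have ha0 : 0 ≤ Real.arctan x := (my_arctan_pos hx).le
    have hax : Real.arctan x ≤ x := my_arctan_le_self hx.le
    have hx2 : (0:ℝ) < x^2 := by positivity
    have h1x2 : (0:ℝ) < 1 + x^2 := by positivity
    have key : 0 ≤ (x^2 - 1) * Real.arctan x + x := by
      rcases le_or_gt 1 (x^2) with h | h
      · nlinarith
      · nlinarith [mul_le_mul_of_nonneg_left hax (by nlinarith : (0:ℝ) ≤ 1 - x^2)]
    have e : (1 + -(x^2)⁻¹) * Real.arctan x + (x + x⁻¹) * (1/(1+x^2))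
        = ((x^2 - 1) * Real.arctan x + x) / x^2 := by
      field_simp
      ring
    rw [e]
    exact div_nonneg key (sq_nonneg x)

lemma keyB {s u : ℝ} (hs : 0 ≤ s) (hs1 : s ≤ 1) (hu : 0 < u) :
    (1 + (s*u)^2) * Real.arctan (s*u) ≤ s * (1 + u^2) * Real.arctan u := by
  rcases hs.eq_or_lt with h | h
  · simp [← h]
  · have hsu : 0 < s * u := mul_pos h hu
    have hle : s * u ≤ u := by nlinarith
    have := aux_mono (mem_Ioi.2 hsu) (mem_Ioi.2 hu) hle
    simp only at this
    have h2 : u * ((s*u + (s*u)⁻¹) * Real.arctan (s*u)) ≤ u * ((u + u⁻¹) * Real.arctan u) :=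
      mul_le_mul_of_nonneg_left this hu.le
    have e1 : u * ((s*u + (s*u)⁻¹) * Real.arctan (s*u)) = (1 + (s*u)^2) * Real.arctan (s*u) / s := by
      field_simp; ring
    have e2 : u * ((u + u⁻¹) * Real.arctan u) = (1 + u^2) * Real.arctan u := by
      rw [show u * ((u + u⁻¹) * Real.arctan u) = (u*u + u*u⁻¹) * Real.arctan u by ring,
        mul_inv_cancel₀ hu.ne']
      ring
    rw [e1, e2, div_le_iff₀ h] at h2
    nlinarith [h2]

lemma ratio_mono {s : ℝ} (hs : 0 ≤ s) (hs1 : s ≤ 1) :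
    MonotoneOn (fun u => Real.arctan (s * u) / Real.arctan u) (Ioi 0) := by
  apply monotoneOn_of_deriv_nonneg (convex_Ioi 0)
  · apply ContinuousOn.div
    · exact (Real.continuous_arctan.comp (continuous_const.mul continuous_id)).continuousOn
    · exact Real.continuous_arctan.continuousOn
    · intro x hx; exact (my_arctan_pos hx).ne'
  · rw [interior_Ioi]
    intro x hx
    apply DifferentiableAt.differentiableWithinAt
    exact ((Real.differentiable_arctan (s*x)).comp x
      ((differentiable_const s).differentiableAt.mul differentiable_id.differentiableAt)).div
      (Real.differentiable_arctan x) (my_arctan_pos hx).ne'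
  · rw [interior_Ioi]
    intro x hx
    have hne : Real.arctan x ≠ 0 := (my_arctan_pos hx).ne'
    have hinner : HasDerivAt (fun u : ℝ => s * u) s x := by
      simpa using (hasDerivAt_id x).const_mul s
    have h1 : HasDerivAt (fun u : ℝ => Real.arctan (s * u)) (1/(1+(s*x)^2) * s) x :=
      (Real.hasDerivAt_arctan (s*x)).comp x hinner
    have hd : HasDerivAt (fun u => Real.arctan (s * u) / Real.arctan u)
        ((1/(1+(s*x)^2) * s * Real.arctan x - Real.arctan (s*x) * (1/(1+x^2)))
          / (Real.arctan x)^2) x :=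
      h1.div (Real.hasDerivAt_arctan x) hne
    rw [hd.deriv]
    apply div_nonneg _ (sq_nonneg _)
    rw [sub_nonneg]
    have hB := keyB hs hs1 hx
    have p1 : (0:ℝ) < 1 + (s*x)^2 := by positivity
    have p2 : (0:ℝ) < 1 + x^2 := by positivity
    rw [mul_one_div, div_mul_eq_mul_div, div_mul_eq_mul_div, div_le_div_iff₀ p2 p1]
    nlinarith [hB]

/-- For `s ∈ [0,1)`, the partial-integral function
`ξ_s(d) = arctan(πWs/d)/(W arctan(πW/d))` is decreasing in `d` on `(0,∞)`;
equivalently, for fixed `s ∈ (0,1)`, `u ↦ arctan(su)/arctan(u)` is increasing on `(0,∞)`. -/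
theorem xi_antitone (W : ℝ) (hW : 0 < W) :
    (∀ s ∈ Ico (0 : ℝ) 1,
        AntitoneOn (fun d => Real.arctan (π * W * s / d) / (W * Real.arctan (π * W / d)))
          (Ioi 0)) ∧
      ∀ s ∈ Ioo (0 : ℝ) 1,
        MonotoneOn (fun u => Real.arctan (s * u) / Real.arctan u) (Ioi 0) := by
  constructor
  · rintro s ⟨hs0, hs1⟩ a ha b hb hab
    simp only [mem_Ioi] at ha hb
    have hua : 0 < π * W / a := by positivity
    have hub : 0 < π * W / b := by positivity
    have hle : π * W / b ≤ π * W / a :=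
      div_le_div_of_nonneg_left (by positivity) ha hab
    have hmono := ratio_mono hs0 hs1.le (mem_Ioi.2 hub) (mem_Ioi.2 hua) hle
    simp only at hmono
    have hda : 0 < Real.arctan (π * W / a) := my_arctan_pos hua
    have hdb : 0 < Real.arctan (π * W / b) := my_arctan_pos hub
    have h2 : Real.arctan (s * (π * W / b)) / Real.arctan (π * W / b) / W ≤
        Real.arctan (s * (π * W / a)) / Real.arctan (π * W / a) / W :=
      div_le_div_of_nonneg_right hmono hW.le
    calc Real.arctan (π * W * s / b) / (W * Real.arctan (π * W / b))
        = Real.arctan (s * (π * W / b)) / Real.arctan (π * W / b) / W := by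
          rw [show π * W * s / b = s * (π * W / b) by ring, div_div, mul_comm W]
      _ ≤ Real.arctan (s * (π * W / a)) / Real.arctan (π * W / a) / W := h2
      _ = Real.arctan (π * W * s / a) / (W * Real.arctan (π * W / a)) := by
          rw [show π * W * s / a = s * (π * W / a) by ring, div_div, mul_comm W]
  · rintro s ⟨hs0, hs1⟩
    exact ratio_mono hs0.le hs1.le
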